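/- Fix α > 0 and let μ be an absolutely continuous probability measure on ℝ. Let A be the expansion map (Aμ is the measure whose icdf is X_μ(m) + αm), and T_μ(x) := x + α·μ((-∞,x)). Then Aμ = (T_μ)_# μ, i.e., the expansion of μ equals the push-forward of μ under T_μ. -/

import Mathlib

open MeasureTheory Set

/-- Inverse cumulative distribution function `X m = inf {x | μ((-∞,x]) > m}`. -/
noncomputable def icdf (μ : Measure ℝ) (m : ℝ) : ℝ :=
  sInf {x : ℝ | m < (μ (Iic x)).toReal}

/-- The expansion map `A`: `Aμ` is the measure whose icdf is `X_μ(m) + α m`;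
equivalently the push-forward of Lebesgue measure on (0,1) under `m ↦ X_μ(m) + α m`. -/
noncomputable def expand (α : ℝ) (μ : Measure ℝ) : Measure ℝ :=
  Measure.map (fun m => icdf μ m + α * m) (volume.restrict (Ioo (0:ℝ) 1))

/-- The map `T_μ(x) = x + α μ((-∞,x))`. -/
noncomputable def Tmap (α : ℝ) (μ : Measure ℝ) (x : ℝ) : ℝ :=
  x + α * (μ (Iio x)).toReal

/-!
The quantile function `X_μ` pushes Lebesgue measure on `(0,1)` forward to `μ`. For `m ∈ (0,1)`
it satisfies `μ((-∞, X_μ m)) ≤ m ≤ μ((-∞, X_μ m])`, and when `μ` has no atoms both sides are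
equal, so `T_μ (X_μ m) = X_μ m + α m`. Hence `Aμ` is the image of Lebesgue measure on `(0,1)`
under `T_μ ∘ X_μ`, which is `(T_μ)_# (X_μ)_# Leb = (T_μ)_# μ`.
-/

open ProbabilityTheory Filter Topology

section Quantile

variable {μ : Measure ℝ} {m : ℝ}

lemma bddBelow_lt_cdf (hm : 0 < m) : BddBelow {x : ℝ | m < cdf μ x} := by
  obtain ⟨y, hy⟩ := ((tendsto_cdf_atBot μ).eventually (eventually_lt_nhds hm)).exists
  exact ⟨y, fun x hx => le_of_not_gt fun hxy => (hx.trans_le (monotone_cdf μ hxy.le)).not_gt hy⟩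

lemma nonempty_lt_cdf (hm : m < 1) : {x : ℝ | m < cdf μ x}.Nonempty :=
  ((tendsto_cdf_atTop μ).eventually (eventually_gt_nhds hm)).exists

variable [IsProbabilityMeasure μ]

lemma icdf_eq_sInf_cdf : icdf μ m = sInf {x : ℝ | m < cdf μ x} := by
  simp only [icdf, cdf_eq_real, measureReal_def]

lemma icdf_le_of_lt_cdf (hm : 0 < m) {x : ℝ} (hx : m < cdf μ x) : icdf μ m ≤ x := by
  rw [icdf_eq_sInf_cdf]
  exact csInf_le (bddBelow_lt_cdf hm) hx

lemma le_cdf_icdf (hm : m < 1) : m ≤ cdf μ (icdf μ m) := by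
  rw [icdf_eq_sInf_cdf]
  refine ge_of_tendsto (((cdf μ).right_continuous _).tendsto.mono_left
    (nhdsWithin_mono _ Ioi_subset_Ici_self)) ?_
  filter_upwards [self_mem_nhdsWithin] with y hy
  obtain ⟨z, hz, hzy⟩ := exists_lt_of_csInf_lt (nonempty_lt_cdf hm) hy
  exact (hz.trans_le (monotone_cdf μ hzy.le)).le

lemma measure_Iio_icdf_le (hm : 0 < m) : μ (Iio (icdf μ m)) ≤ ENNReal.ofReal m := by
  have h := (cdf μ).measure_Iio (tendsto_cdf_atBot μ) (icdf μ m)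
  rw [measure_cdf, sub_zero] at h
  rw [h, (monotone_cdf μ).leftLim_eq_sSup]
  refine ENNReal.ofReal_le_ofReal (csSup_le (nonempty_Iio.image _) ?_)
  rintro _ ⟨y, hy, rfl⟩
  exact le_of_not_gt fun h => (icdf_le_of_lt_cdf hm h).not_gt hy

lemma measure_Iio_icdf [NullSingletonClass μ] (hm : m ∈ Ioo 0 1) :
    μ (Iio (icdf μ m)) = ENNReal.ofReal m :=
  le_antisymm (measure_Iio_icdf_le hm.1) <| by
    rw [measure_congr Iio_ae_eq_Iic, ← ofReal_cdf]
    exact ENNReal.ofReal_le_ofReal (le_cdf_icdf hm.2)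

lemma monotoneOn_icdf : MonotoneOn (icdf μ) (Ioo 0 1) := by
  intro a ha b hb hab
  rw [icdf_eq_sInf_cdf, icdf_eq_sInf_cdf]
  exact csInf_le_csInf (bddBelow_lt_cdf ha.1) (nonempty_lt_cdf hb.2) fun x hx => hab.trans_lt hx

lemma aemeasurable_icdf : AEMeasurable (icdf μ) (volume.restrict (Ioo 0 1)) :=
  aemeasurable_restrict_of_monotoneOn measurableSet_Ioo monotoneOn_icdf

lemma map_icdf_volume_Ioo : (volume.restrict (Ioo 0 1)).map (icdf μ) = μ := by
  refine Measure.ext_of_Iic _ _ fun a => ?_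
  rw [Measure.map_apply_of_aemeasurable aemeasurable_icdf measurableSet_Iic,
    Measure.restrict_apply' measurableSet_Ioo, ← ofReal_cdf μ a]
  refine le_antisymm ?_ ?_
  · calc volume (icdf μ ⁻¹' Iic a ∩ Ioo 0 1) ≤ volume (Ioc 0 (cdf μ a)) :=
          measure_mono fun m ⟨hma, hm⟩ => ⟨hm.1, (le_cdf_icdf hm.2).trans (monotone_cdf μ hma)⟩
      _ = ENNReal.ofReal (cdf μ a) := by rw [Real.volume_Ioc, sub_zero]
  · calc ENNReal.ofReal (cdf μ a) = volume (Ioo 0 (cdf μ a)) := by rw [Real.volume_Ioo, sub_zero]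
      _ ≤ volume (icdf μ ⁻¹' Iic a ∩ Ioo 0 1) :=
          measure_mono fun m hm => ⟨icdf_le_of_lt_cdf hm.1 hm.2,
            hm.1, hm.2.trans_le (cdf_le_one μ a)⟩

end Quantile

lemma measurable_Tmap (α : ℝ) (μ : Measure ℝ) [IsFiniteMeasure μ] : Measurable (Tmap α μ) := by
  have : Monotone fun x => (μ (Iio x)).toReal := fun x y hxy =>
    ENNReal.toReal_mono (measure_ne_top μ _) (measure_mono (Iio_subset_Iio hxy))
  exact measurable_id.add (measurable_const.mul this.measurable)

lemma Tmap_icdf (α : ℝ) {μ : Measure ℝ} [IsProbabilityMeasure μ] [NullSingletonClass μ] {m : ℝ}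
    (hm : m ∈ Ioo 0 1) : Tmap α μ (icdf μ m) = icdf μ m + α * m := by
  rw [Tmap, measure_Iio_icdf hm, ENNReal.toReal_ofReal hm.1.le]

theorem expand_eq_pushforward_Tmap_general (α : ℝ)
    (μ : Measure ℝ) [IsProbabilityMeasure μ] (hac : μ ≪ volume) :
    expand α μ = Measure.map (Tmap α μ) μ := by
  have : NullSingletonClass μ := ⟨fun _ => hac Real.volume_singleton⟩
  calc expand α μ = (volume.restrict (Ioo 0 1)).map (Tmap α μ ∘ icdf μ) :=
        Measure.map_congr <| (ae_restrict_iff' measurableSet_Ioo).2 <|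
          ae_of_all _ fun m hm => (Tmap_icdf α hm).symm
    _ = Measure.map (Tmap α μ) μ := by
        rw [← AEMeasurable.map_map_of_aemeasurable (measurable_Tmap α μ).aemeasurable
          aemeasurable_icdf, map_icdf_volume_Ioo]

/-- For an absolutely continuous probability measure μ,
the expansion of μ equals the push-forward of μ under `T_μ`: `Aμ = (T_μ)_# μ`. -/
theorem expand_eq_pushforward_Tmap (α : ℝ) (hα : 0 < α)
    (μ : Measure ℝ) [IsProbabilityMeasure μ] (hac : μ ≪ volume) :
    expand α μ = Measure.map (Tmap α μ) μ :=
  expand_eq_pushforward_Tmap_general α μ hac
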